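/- In the free L-algebra on a set X (an algebra with two binary operations ≺, ≻ modulo only the relation (x ≻ y) ≺ z = x ≻ (y ≺ z)), every element can be uniquely written as a linear combination of normal L-words; in particular, for any L-words u, v, the normal form of u ≺ v is: u ≺ v if u is a letter or u = u₁ ≺ u₂, and u₁ ≻ [u₂ ≺ v] if u = u₁ ≻ u₂, and this rewriting terminates and is confluent. -/

import Mathlib

/-- `L`-words over an alphabet `X`: letters and the two binary operations
`pr` (≺) and `sc` (≻). -/
inductive LWord (X : Type) where
  | ltr : X → LWord X
  | pr : LWord X → LWord X → LWord X
  | sc : LWord X → LWord X → LWord X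
deriving DecidableEq

/-- Number of letter occurrences in an `L`-word. -/
def LWord.deg {X : Type} : LWord X → ℕ
  | .ltr _ => 1
  | .pr u v => u.deg + v.deg
  | .sc u v => u.deg + v.deg

/-- Normal `L`-words: letters; `v ≻ w` with `v, w` normal; and `v ≺ w` with
`v, w` normal and `v` not of the form `v₁ ≻ v₂`. -/
inductive IsNormalL {X : Type} : LWord X → Prop
  | ltr (x : X) : IsNormalL (.ltr x)
  | sc {v w : LWord X} : IsNormalL v → IsNormalL w → IsNormalL (.sc v w)
  | pr {v w : LWord X} : IsNormalL v → IsNormalL w →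
      (∀ v1 v2 : LWord X, v ≠ .sc v1 v2) → IsNormalL (.pr v w)

/-- Normalized `≺`-product: `[u ≺ v] = u ≺ v` unless `u = u₁ ≻ u₂`, in which
case `[u ≺ v] = u₁ ≻ [u₂ ≺ v]`. -/
def nprL {X : Type} : LWord X → LWord X → LWord X
  | .sc u1 u2, v => .sc u1 (nprL u2 v)
  | .ltr x, v => .pr (.ltr x) v
  | .pr u1 u2, v => .pr (.pr u1 u2) v

/-- The normal form of an `L`-word under the rewriting
`(x ≻ y) ≺ z → x ≻ (y ≺ z)`. -/
def nfL {X : Type} : LWord X → LWord X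
  | .ltr x => .ltr x
  | .sc u v => .sc (nfL u) (nfL v)
  | .pr u v => nprL (nfL u) (nfL v)

/-- The congruence on `L`-words generated by the entanglement relation
`(x ≻ y) ≺ z = x ≻ (y ≺ z)`. -/
inductive LCong {X : Type} : LWord X → LWord X → Prop
  | ent (x y z : LWord X) : LCong (.pr (.sc x y) z) (.sc x (.pr y z))
  | refl (u : LWord X) : LCong u u
  | symm {u v : LWord X} : LCong u v → LCong v u
  | trans {u v w : LWord X} : LCong u v → LCong v w → LCong u w
  | congr_pr {u u' v v' : LWord X} : LCong u u' → LCong v v' → LCong (.pr u v) (.pr u' v')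
  | congr_sc {u u' v v' : LWord X} : LCong u u' → LCong v v' → LCong (.sc u v) (.sc u' v')

/-!
`nfL` is a normalization function for `LCong`: it sends every word to a normal word
congruent to it, it fixes normal words, and it is constant on congruence classes, because
the defining equation `nprL (x ≻ y) z = x ≻ nprL y z` is exactly the entanglement relation.
Hence the normal words form a system of representatives of the congruence classes.
-/

section

variable {X : Type}

theorem nprL_of_ne_sc {u : LWord X} (v : LWord X) (hu : ∀ u1 u2 : LWord X, u ≠ .sc u1 u2) :
    nprL u v = .pr u v := by
  cases u with
  | ltr x => rfl
  | pr u1 u2 => rfl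
  | sc u1 u2 => exact absurd rfl (hu u1 u2)

theorem IsNormalL.nprL {u v : LWord X} (hu : IsNormalL u) (hv : IsNormalL v) :
    IsNormalL (nprL u v) := by
  induction hu with
  | ltr x => exact .pr (.ltr x) hv (by simp)
  | sc hu1 _ _ ih => exact .sc hu1 ih
  | pr hu1 hu2 hne => exact .pr (.pr hu1 hu2 hne) hv (by simp)

theorem isNormalL_nfL (u : LWord X) : IsNormalL (nfL u) := by
  induction u with
  | ltr x => exact .ltr x
  | pr u v hu hv => exact hu.nprL hv
  | sc u v hu hv => exact .sc hu hv

theorem nfL_eq_self {u : LWord X} (hu : IsNormalL u) : nfL u = u := by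
  induction hu with
  | ltr x => rfl
  | sc _ _ ihv ihw => rw [nfL, ihv, ihw]
  | pr _ _ hne ihv ihw => rw [nfL, ihv, ihw, nprL_of_ne_sc _ hne]

theorem lCong_nprL (u v : LWord X) : LCong (.pr u v) (nprL u v) := by
  induction u with
  | ltr x => exact .refl _
  | pr u1 u2 => exact .refl _
  | sc u1 u2 _ ih => exact .trans (.ent u1 u2 v) (.congr_sc (.refl u1) ih)

theorem lCong_nfL (u : LWord X) : LCong u (nfL u) := by
  induction u with
  | ltr x => exact .refl _
  | pr u v hu hv => exact .trans (.congr_pr hu hv) (lCong_nprL _ _)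
  | sc u v hu hv => exact .congr_sc hu hv

theorem LCong.nfL_eq {u v : LWord X} (h : LCong u v) : nfL u = nfL v := by
  induction h with
  | ent x y z => rfl
  | refl u => rfl
  | symm _ ih => exact ih.symm
  | trans _ _ ih1 ih2 => exact ih1.trans ih2
  | congr_pr _ _ ih1 ih2 => rw [nfL, nfL, ih1, ih2]
  | congr_sc _ _ ih1 ih2 => rw [nfL, nfL, ih1, ih2]

theorem lCong_iff_nfL_eq (u v : LWord X) : LCong u v ↔ nfL u = nfL v :=
  ⟨LCong.nfL_eq, fun h => (lCong_nfL u).trans (h ▸ (lCong_nfL v).symm)⟩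

theorem IsNormalL.eq_of_lCong {u v : LWord X} (hu : IsNormalL u) (hv : IsNormalL v)
    (h : LCong u v) : u = v := by
  rw [← nfL_eq_self hu, ← nfL_eq_self hv, h.nfL_eq]

theorem nfL_pr_of_ne_sc {u v : LWord X} (hu : IsNormalL u) (hv : IsNormalL v)
    (hne : ∀ u1 u2 : LWord X, u ≠ .sc u1 u2) : nfL (.pr u v) = .pr u v := by
  rw [nfL, nfL_eq_self hu, nfL_eq_self hv, nprL_of_ne_sc _ hne]

theorem nfL_pr_sc {u1 : LWord X} (u2 v : LWord X) (hu1 : IsNormalL u1) :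
    nfL (.pr (.sc u1 u2) v) = .sc u1 (nfL (.pr u2 v)) := by
  rw [nfL, nfL, nprL, nfL_eq_self hu1, ← nfL]

end

/-- In the free `L`-algebra, the rewriting `(x ≻ y) ≺ z → x ≻ (y ≺ z)` terminates
and is confluent, with the normal `L`-words as unique normal forms: every word is
congruent to a unique normal word (so normal `L`-words are a basis of the free
`L`-algebra), and the normal form of `u ≺ v` is `u ≺ v` if `u` is a letter or
`u = u₁ ≺ u₂`, and `u₁ ≻ [u₂ ≺ v]` if `u = u₁ ≻ u₂`. -/
theorem lword_normal_form_unique (X : Type) :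
    (∀ u : LWord X, IsNormalL (nfL u)) ∧
    (∀ u : LWord X, LCong u (nfL u)) ∧
    (∀ u v : LWord X, LCong u v ↔ nfL u = nfL v) ∧
    (∀ u v : LWord X, IsNormalL u → IsNormalL v → LCong u v → u = v) ∧
    (∀ u v : LWord X, IsNormalL u → IsNormalL v →
      (∀ u1 u2 : LWord X, u ≠ .sc u1 u2) → nfL (.pr u v) = .pr u v) ∧
    (∀ u1 u2 v : LWord X, IsNormalL (.sc u1 u2) → IsNormalL v →
      nfL (.pr (.sc u1 u2) v) = .sc u1 (nfL (.pr u2 v))) :=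
  ⟨isNormalL_nfL, lCong_nfL, lCong_iff_nfL_eq, fun _ _ hu hv => hu.eq_of_lCong hv,
    fun _ _ => nfL_pr_of_ne_sc, fun _ u2 v (.sc hu1 _) _ => nfL_pr_sc u2 v hu1⟩
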